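/- arXiv:1605.04631 — 2 statements merged into one kernel-verified Lean document; each statement's English description precedes it below -/
import Mathlib

section
/- Let H*(E) = ℤ ⊕ ℤω with ω² = 0 denote the cohomology ring of an elliptic curve (exterior part suppressed), and let Λ be a commutative ring (playing the role of the even cohomology of a K3 surface) with a symmetric bilinear pairing ⟨·,·⟩ on a submodule Pic ⊆ Λ and a distinguished point class p with ⟨c, c⟩ defined for c ∈ Pic. For a class ch = (r, ℓ + aω, ℓ'ω + d·p, n·p·ω) in the Künneth decomposition (with r, a, d, n ∈ ℤ, ℓ, ℓ' ∈ Pic), define the transform ψ acting on cohomology by: Poincaré duality on the H*(E)-factor, followed by multiplication by exp(c) for c ∈ Pic, followed by pushforward to a point in the Λ-direction (integration of the Λ-factor against the Mukai vector of the K3, here encoded by ∫_S (x · td_S) with td_S = (1, 0, 2·p)). Then ch₀(ψ) = a(2 + ½⟨c,c⟩) + ⟨c, ℓ'⟩ + n and ch₁(ψ) = [−r(2 + ½⟨c,c⟩) − ⟨ℓ, c⟩ − d]·ω. -/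
/-! We model `H^even(K3, ℚ)` as `ℚ × M × ℚ` (degrees 0, 2, 4) where `M` is the
Picard module with intersection pairing `B`, and `H^even(E)` as a rank-two
module, so a total class is a pair `(part₀, part_ω)`.  The transform `ψ` is
(signed) Poincaré duality in the `ω`-variable, followed by multiplication with
`exp c = (1, c, ½⟨c,c⟩)`, followed by pushforward along the K3 factor against
the Todd class `(1, 0, 2·p)`. -/

section FM

variable {M : Type*} [AddCommGroup M] [Module ℚ M]

/-- Multiplication on the even cohomology `ℚ × M × ℚ` of a K3 surface with
intersection pairing `B`. -/
def K3mul (B : M →ₗ[ℚ] M →ₗ[ℚ] ℚ) (x y : ℚ × M × ℚ) : ℚ × M × ℚ :=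
  (x.1 * y.1, x.1 • y.2.1 + y.1 • x.2.1,
    x.1 * y.2.2 + y.1 * x.2.2 + B x.2.1 y.2.1)

/-- Signed Poincaré duality on the elliptic-curve factor: `x + y·ω ↦ y − x·ω`. -/
def PDE (v : (ℚ × M × ℚ) × (ℚ × M × ℚ)) : (ℚ × M × ℚ) × (ℚ × M × ℚ) :=
  (v.2, -v.1)

/-- Pushforward to a point along the K3 factor, i.e. `x ↦ ∫_S x · td_S` with
`td_S = (1, 0, 2·p)`. -/
def pushK3 (v : ℚ × M × ℚ) : ℚ := v.2.2 + 2 * v.1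

/-- `exp c = 1 + c + ½⟨c,c⟩·p`. -/
def expc (B : M →ₗ[ℚ] M →ₗ[ℚ] ℚ) (c : M) : ℚ × M × ℚ := (1, c, B c c / 2)

/-- The transform `ψ` on cohomology: `(ch₀ ψ, ch₁ ψ)` where `ch₁ ψ` is the
coefficient of `ω`. -/
def psiFM (B : M →ₗ[ℚ] M →ₗ[ℚ] ℚ) (c : M)
    (v : (ℚ × M × ℚ) × (ℚ × M × ℚ)) : ℚ × ℚ :=
  (pushK3 (K3mul B (PDE v).1 (expc B c)), pushK3 (K3mul B (PDE v).2 (expc B c)))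

theorem pushK3_K3mul_expc (B : M →ₗ[ℚ] M →ₗ[ℚ] ℚ) (c : M) (x : ℚ × M × ℚ) :
    pushK3 (K3mul B x (expc B c)) = x.1 * (2 + B c c / 2) + B x.2.1 c + x.2.2 := by
  simp only [pushK3, K3mul, expc]
  ring

/-- for `ch = (r, ℓ + aω, ℓ'ω + d·p, n·p·ω)`,
`ch₀(ψ) = a(2 + ½⟨c,c⟩) + ⟨c,ℓ'⟩ + n` and
`ch₁(ψ) = (−r(2 + ½⟨c,c⟩) − ⟨ℓ,c⟩ − d)·ω`. -/
theorem stmt13 (B : M →ₗ[ℚ] M →ₗ[ℚ] ℚ)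
    (hsym : ∀ x y : M, B x y = B y x)
    (r a d n : ℤ) (ℓ ℓ' c : M) :
    psiFM B c (((r : ℚ), ℓ, (d : ℚ)), ((a : ℚ), ℓ', (n : ℚ))) =
      ((a : ℚ) * (2 + B c c / 2) + B c ℓ' + n,
        -((r : ℚ) * (2 + B c c / 2)) - B ℓ c - d) := by
  simp only [psiFM, PDE, pushK3_K3mul_expc, Prod.fst_neg, Prod.snd_neg, map_neg,
    LinearMap.neg_apply, hsym ℓ' c]
  ext <;> ring

end FM
end

section
/- Suppose P(q) ∈ ℤ[q, q⁻¹] (a Laurent polynomial with integer coefficients) satisfies P(q) = c·(q/(1+q)²)·L₁(q) + L₂(q) where c ∈ ℚ, and L₁, L₂ ∈ ℚ[q, q⁻¹] are Laurent polynomials invariant under q ↦ q⁻¹, under the additional hypothesis that (1+q)² divides the relevant combination so that the right-hand side is a Laurent polynomial. Then (q+2+q⁻¹)·P(q) lies in ℤ[q+q⁻¹] ⊗ ℚ, P is invariant under q ↦ q⁻¹, and there exist N ≥ 0 and integers n_0, …, n_N with P(q) = ∑_{g=0}^{N} n_g · (q + 2 + q⁻¹)^{g−1}, where (q + 2 + q⁻¹)^{−1}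 is interpreted via the identity q/(1+q)² = (q + 2 + q⁻¹)^{−1}; that is, the expansion of P in powers (q+2+q⁻¹)^{g−1}, g ≥ 0, has integer coefficients. -/
open LaurentPolynomial

section Aux

local notation "S" => (T 1 + 2 + T (-1) : LaurentPolynomial ℚ)

lemma lp_one_apply (i : ℤ) : (1 : LaurentPolynomial ℚ).coeff i = if 0 = i then 1 else 0 := by
  rw [← T_zero, T_apply]

lemma lp_T_mul_apply (n : ℤ) (f : LaurentPolynomial ℚ) (i : ℤ) :
    (T n * f : LaurentPolynomial ℚ).coeff i = f.coeff (i - n) := by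
  have h := AddMonoidAlgebra.coeff_single_mul_apply f (1 : ℚ) n i
  rw [one_mul] at h
  have e : (T n * f : LaurentPolynomial ℚ).coeff i = f.coeff (-n + i) := h
  rw [e]; congr 1; ring

lemma lp_two_mul_apply (f : LaurentPolynomial ℚ) (i : ℤ) :
    ((2 : LaurentPolynomial ℚ) * f).coeff i = 2 * f.coeff i := by
  rw [two_mul, AddMonoidAlgebra.coeff_add, Finsupp.add_apply, two_mul]

lemma S_mul_apply (f : LaurentPolynomial ℚ) (i : ℤ) :
    (S * f).coeff i = f.coeff (i - 1) + 2 * f.coeff i + f.coeff (i + 1) := by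
  have e : S * f = T 1 * f + 2 * f + T (-1) * f := by ring
  calc (S * f).coeff i = (T 1 * f + 2 * f + T (-1) * f : LaurentPolynomial ℚ).coeff i := by rw [e]
    _ = (T 1 * f : LaurentPolynomial ℚ).coeff i + ((2 : LaurentPolynomial ℚ) * f).coeff i
          + (T (-1) * f : LaurentPolynomial ℚ).coeff i := by
        rw [AddMonoidAlgebra.coeff_add, AddMonoidAlgebra.coeff_add, Finsupp.add_apply, Finsupp.add_apply]
    _ = f.coeff (i - 1) + 2 * f.coeff i + f.coeff (i + 1) := by
        rw [lp_T_mul_apply, lp_T_mul_apply, lp_two_mul_apply, sub_neg_eq_add]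

lemma lp_zsmul_apply (m : ℤ) (f : LaurentPolynomial ℚ) (i : ℤ) :
    (m • f).coeff i = (m : ℚ) * f.coeff i := by
  rw [AddMonoidAlgebra.coeff_smul_apply, zsmul_eq_mul]

lemma invert_S : invert S = S := by
  have h2 : invert (2 : LaurentPolynomial ℚ) = 2 := by
    rw [show (2 : LaurentPolynomial ℚ) = 1 + 1 from (one_add_one_eq_two).symm, map_add, map_one]
  rw [map_add, map_add, invert_T, invert_T, h2, neg_neg]
  ring

lemma S_pow_int (d : ℕ) (i : ℤ) : ∃ m : ℤ, (S ^ d).coeff i = (m : ℚ) := by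
  induction d generalizing i with
  | zero =>
    rw [pow_zero, lp_one_apply]
    by_cases h : (0 : ℤ) = i
    · exact ⟨1, by rw [if_pos h]; norm_num⟩
    · exact ⟨0, by rw [if_neg h]; norm_num⟩
  | succ d ih =>
    obtain ⟨a, ha⟩ := ih (i - 1)
    obtain ⟨b, hb⟩ := ih i
    obtain ⟨e, he⟩ := ih (i + 1)
    refine ⟨a + 2 * b + e, ?_⟩
    rw [pow_succ, mul_comm, S_mul_apply, ha, hb, he]
    push_cast; ring

lemma S_pow_support (d : ℕ) (i : ℤ) (h : (d : ℤ) < i ∨ i < -(d : ℤ)) : (S ^ d).coeff i = 0 := by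
  induction d generalizing i with
  | zero =>
    rw [pow_zero, lp_one_apply, if_neg (by omega)]
  | succ d ih =>
    rw [pow_succ, mul_comm, S_mul_apply]
    push_cast at h ⊢
    rw [ih (i - 1) (by omega), ih i (by omega), ih (i + 1) (by omega)]
    ring

lemma S_pow_top (d : ℕ) : (S ^ d).coeff (d : ℤ) = 1 := by
  induction d with
  | zero => rw [pow_zero, lp_one_apply]; norm_num
  | succ d ih =>
    rw [pow_succ, mul_comm, S_mul_apply]
    have e1 : ((d : ℕ) + 1 : ℤ) - 1 = (d : ℤ) := by ring
    have h2 : (S ^ d).coeff (((d : ℕ) + 1 : ℕ) : ℤ) = 0 := S_pow_support d _ (by left; push_cast; omega)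
    have h3 : (S ^ d).coeff ((((d : ℕ) + 1 : ℕ) : ℤ) + 1) = 0 := S_pow_support d _ (by push_cast; omega)
    push_cast at h2 h3 ⊢
    rw [e1, ih, h2, h3]
    ring

lemma key (d : ℕ) : ∀ Q : LaurentPolynomial ℚ,
    (∀ i : ℤ, ((d : ℤ) < i ∨ i < -(d : ℤ)) → Q.coeff i = 0) →
    invert Q = Q →
    (∀ i : ℤ, ∃ m : ℤ, Q.coeff i = (m : ℚ)) →
    ∃ n : ℕ → ℤ, Q = ∑ g ∈ Finset.range (d + 1), n g • S ^ g := by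
  induction d with
  | zero =>
    intro Q hsupp _ hint
    obtain ⟨m, hm⟩ := hint 0
    refine ⟨fun _ => m, ?_⟩
    rw [Finset.sum_range_one, pow_zero]
    ext i
    rw [lp_zsmul_apply, lp_one_apply]
    by_cases h : (0 : ℤ) = i
    · rw [if_pos h, ← h, hm, mul_one]
    · rw [if_neg h, hsupp i (by omega), mul_zero]
  | succ d ih =>
    intro Q hsupp hinv hint
    obtain ⟨m, hm⟩ := hint ((d : ℤ) + 1)
    set Q' : LaurentPolynomial ℚ := Q - m • S ^ (d + 1) with hQ'
    have hQ'app : ∀ i : ℤ, Q'.coeff i = Q.coeff i - (m : ℚ) * (S ^ (d + 1)).coeff i := by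
      intro i
      rw [hQ', AddMonoidAlgebra.coeff_sub, Finsupp.sub_apply, lp_zsmul_apply]
    have hStop : (S ^ (d + 1)).coeff ((d : ℤ) + 1) = 1 := by
      have := S_pow_top (d + 1)
      push_cast at this
      exact this
    have hsupp' : ∀ i : ℤ, ((d : ℤ) < i ∨ i < -(d : ℤ)) → Q'.coeff i = 0 := by
      intro i hi
      rw [hQ'app]
      rcases lt_trichotomy ((d : ℤ) + 1) i with hbig | heq | hsm
      · rw [hsupp i (by omega), S_pow_support (d + 1) i (by push_cast; omega)]
        ring
      · rw [← heq, hm, hStop]; ring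
      · rcases lt_trichotomy i (-((d : ℤ) + 1)) with hbig2 | heq2 | hsm2
        · rw [hsupp i (by omega), S_pow_support (d + 1) i (by push_cast; omega)]
          ring
        · have hQi : Q.coeff (-((d : ℤ) + 1)) = Q.coeff ((d : ℤ) + 1) := by
            conv_lhs => rw [← hinv]
            rw [invert_apply, neg_neg]
          have hSsym : (S ^ (d + 1)).coeff (-((d : ℤ) + 1)) = 1 := by
            have hi2 : invert (S ^ (d + 1)) = S ^ (d + 1) := by rw [map_pow, invert_S]
            calc (S ^ (d + 1)).coeff (-((d : ℤ) + 1))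
                = (invert (S ^ (d + 1))).coeff (-((d : ℤ) + 1)) := by rw [hi2]
              _ = (S ^ (d + 1)).coeff ((d : ℤ) + 1) := by rw [invert_apply, neg_neg]
              _ = 1 := hStop
          rw [heq2, hQi, hm, hSsym]; ring
        · exfalso; omega
    have hinv' : invert Q' = Q' := by
      rw [hQ', map_sub, hinv, map_zsmul, map_pow, invert_S]
    have hint' : ∀ i : ℤ, ∃ k : ℤ, Q'.coeff i = (k : ℚ) := by
      intro i
      obtain ⟨a, ha⟩ := hint i
      obtain ⟨b, hb⟩ := S_pow_int (d + 1) i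
      exact ⟨a - m * b, by rw [hQ'app, ha, hb]; push_cast; ring⟩
    obtain ⟨n, hn⟩ := ih Q' hsupp' hinv' hint'
    refine ⟨Function.update n (d + 1) m, ?_⟩
    rw [Finset.sum_range_succ, Function.update_self]
    have hsum : ∑ g ∈ Finset.range (d + 1), Function.update n (d + 1) m g • S ^ g
        = ∑ g ∈ Finset.range (d + 1), n g • S ^ g := by
      apply Finset.sum_congr rfl
      intro g hg
      rw [Function.update_of_ne (by have := Finset.mem_range.mp hg; omega)]
    rw [hsum, ← hn, hQ']
    ring

lemma S_apply_zero : (T 1 + 2 + T (-1) : LaurentPolynomial ℚ).coeff (0 : ℤ) = 2 := by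
  have h2 : ((2 : LaurentPolynomial ℚ)).coeff (0 : ℤ) = 2 := by
    rw [show (2 : LaurentPolynomial ℚ) = 1 + 1 from (one_add_one_eq_two).symm,
      AddMonoidAlgebra.coeff_add, Finsupp.add_apply, lp_one_apply]
    norm_num
  rw [AddMonoidAlgebra.coeff_add, AddMonoidAlgebra.coeff_add, Finsupp.add_apply, Finsupp.add_apply, T_apply, T_apply, h2]
  norm_num

end Aux

/-- Suppose `P ∈ ℤ[q,q⁻¹] ⊂ ℚ[q,q⁻¹]` satisfies
`P = c·(q/(1+q)²)·L₁ + L₂` with `c ∈ ℚ` and `L₁, L₂` Laurent polynomials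
invariant under `q ↦ q⁻¹` (the right-hand side being a Laurent polynomial);
using `q/(1+q)² = (q + 2 + q⁻¹)⁻¹`, this hypothesis reads
`(q+2+q⁻¹)·P = c·L₁ + (q+2+q⁻¹)·L₂`.  Then `P` is invariant under `q ↦ q⁻¹`
and there exist `N ≥ 0` and integers `n_0, …, n_N` with
`P = ∑_{g=0}^N n_g (q + 2 + q⁻¹)^{g-1}`, i.e.
`(q+2+q⁻¹)·P = ∑_{g=0}^N n_g (q+2+q⁻¹)^g`. -/
theorem stmt16 (P : LaurentPolynomial ℚ)
    (hint : ∀ i : ℤ, ∃ m : ℤ, P.coeff i = (m : ℚ))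
    (c : ℚ) (L₁ L₂ : LaurentPolynomial ℚ)
    (hL₁ : LaurentPolynomial.invert L₁ = L₁)
    (hL₂ : LaurentPolynomial.invert L₂ = L₂)
    (hP : (T 1 + 2 + T (-1)) * P = C c * L₁ + (T 1 + 2 + T (-1)) * L₂) :
    LaurentPolynomial.invert P = P ∧
    ∃ (N : ℕ) (n : ℕ → ℤ),
      (T 1 + 2 + T (-1)) * P =
        ∑ g ∈ Finset.range (N + 1), n g • (T 1 + 2 + T (-1)) ^ g := by
  have hS0 : (T 1 + 2 + T (-1) : LaurentPolynomial ℚ) ≠ 0 := by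
    intro h
    have h0 : (T 1 + 2 + T (-1) : LaurentPolynomial ℚ).coeff (0 : ℤ)
        = (0 : LaurentPolynomial ℚ).coeff (0 : ℤ) := by rw [h]
    rw [S_apply_zero, AddMonoidAlgebra.coeff_zero, Finsupp.zero_apply] at h0
    norm_num at h0
  have hSinv := invert_S
  have hPinv : LaurentPolynomial.invert P = P := by
    have h := congrArg (LaurentPolynomial.invert) hP
    simp only [map_mul, map_add, invert_T, invert_C, map_ofNat, neg_neg, hL₁, hL₂] at h
    have e : (T (-1) + 2 + T 1 : LaurentPolynomial ℚ) = T 1 + 2 + T (-1) := by ring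
    rw [e, ← hP] at h
    exact mul_left_cancel₀ hS0 h
  refine ⟨hPinv, ?_⟩
  set Q := (T 1 + 2 + T (-1) : LaurentPolynomial ℚ) * P with hQ
  have hQint : ∀ i : ℤ, ∃ m : ℤ, Q.coeff i = (m : ℚ) := by
    intro i
    obtain ⟨a, ha⟩ := hint (i - 1)
    obtain ⟨b, hb⟩ := hint i
    obtain ⟨e, he⟩ := hint (i + 1)
    exact ⟨a + 2 * b + e, by rw [hQ, S_mul_apply, ha, hb, he]; push_cast; ring⟩
  have hQinv : LaurentPolynomial.invert Q = Q := by
    rw [hQ, map_mul, hSinv, hPinv]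
  set D : ℕ := Q.coeff.support.sup fun i => i.natAbs with hD
  have hQsupp : ∀ i : ℤ, ((D : ℤ) < i ∨ i < -(D : ℤ)) → Q.coeff i = 0 := by
    intro i hi
    by_contra h
    have hmem : i ∈ Q.coeff.support := Finsupp.mem_support_iff.mpr h
    have hle : i.natAbs ≤ D := Finset.le_sup hmem
    omega
  obtain ⟨n, hn⟩ := key D Q hQsupp hQinv hQint
  exact ⟨D, n, hn⟩
end
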